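/- arXiv:2102.07310 — 4 statements merged into one kernel-verified Lean document; each statement's English description precedes it below -/
import Mathlib

section
/- Let γ be a convex x-monotone arc in the plane with left endpoint u and right endpoint v, and let κ = {(x, y) : u_x ≤ x ≤ v_x and (x, y) lies strictly above γ}. Let s be a non-vertical segment with left endpoint p and right endpoint q, lying on the line ℓ, let ρ_p be the rightward ray from p containing s, and ρ_q the leftward ray from q containing s. Then s intersects γ if and only if: (a) ℓ intersects γ, (b) at least one of p, q lies outside κ, and (c) both ρ_p ∩ γ and ρ_q ∩ γ are nonempty. -/
/-- Segment–convex-arc intersection criterion (Lemma: seg-arc).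
γ is the graph of a strictly convex function g over [ux, vx]; κ is the region
strictly above γ between the vertical rays through the endpoints.
s is a non-vertical segment from p = (px, py) to q = (qx, qy), px < qx. -/
theorem segment_intersects_convex_arc_iff
    (g : ℝ → ℝ) (ux vx : ℝ) (huv : ux < vx)
    (hconv : StrictConvexOn ℝ (Set.Icc ux vx) g)
    (px py qx qy : ℝ) (hpq : px < qx) :
    (∃ x, ux ≤ x ∧ x ≤ vx ∧ px ≤ x ∧ x ≤ qx ∧
        g x = py + (qy - py) / (qx - px) * (x - px)) ↔
      ((∃ x, ux ≤ x ∧ x ≤ vx ∧ g x = py + (qy - py) / (qx - px) * (x - px)) ∧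
        (¬ (ux ≤ px ∧ px ≤ vx ∧ g px < py) ∨ ¬ (ux ≤ qx ∧ qx ≤ vx ∧ g qx < qy)) ∧
        (∃ x, ux ≤ x ∧ x ≤ vx ∧ px ≤ x ∧
            g x = py + (qy - py) / (qx - px) * (x - px)) ∧
        (∃ x, ux ≤ x ∧ x ≤ vx ∧ x ≤ qx ∧
            g x = py + (qy - py) / (qx - px) * (x - px))) := by
  set m : ℝ := (qy - py) / (qx - px) with hm
  set f : ℝ → ℝ := fun x => py + m * (x - px) with hf
  have hne : qx - px ≠ 0 := by linarith
  have hfp : f px = py := by simp [hf]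
  have hfq : f qx = qy := by
    simp only [hf, hm]
    field_simp
    ring
  -- key: strict convexity pushes g strictly below the line between two below-points
  have key : ∀ a b c : ℝ, ux ≤ a → c ≤ vx → a < b → b < c →
      g a ≤ f a → g c ≤ f c → g b < f b := by
    intro a b c hua hcv hab hbc hga hgc
    have hac : a < c := hab.trans hbc
    set lam : ℝ := (c - b) / (c - a) with hlam
    set mu : ℝ := (b - a) / (c - a) with hmu
    have hca : (0:ℝ) < c - a := by linarith
    have hlam0 : 0 < lam := div_pos (by linarith) hca
    have hmu0 : 0 < mu := div_pos (by linarith) hca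
    have hsum : lam + mu = 1 := by
      rw [hlam, hmu, ← add_div]; rw [show c - b + (b - a) = c - a by ring, div_self hca.ne']
    have hcomb : lam * a + mu * c = b := by
      rw [hlam, hmu]; field_simp; ring
    have := hconv.2 (x := a) (y := c)
      ⟨hua, le_of_lt (lt_of_lt_of_le hac hcv)⟩
      ⟨le_trans hua (le_of_lt hac), hcv⟩ (ne_of_lt hac) hlam0 hmu0 hsum
    simp only [smul_eq_mul] at this
    rw [hcomb] at this
    have hfa : lam * f a + mu * f c = f b := by
      simp only [hf]
      linear_combination (py - m * px) * hsum + m * hcomb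
    nlinarith [mul_le_mul_of_nonneg_left hga hlam0.le,
      mul_le_mul_of_nonneg_left hgc hmu0.le, this, hfa]
  constructor
  · rintro ⟨x, h1, h2, h3, h4, h5⟩
    refine ⟨⟨x, h1, h2, h5⟩, ?_, ⟨x, h1, h2, h3, h5⟩, ⟨x, h1, h2, h4, h5⟩⟩
    by_contra hb
    push_neg at hb
    obtain ⟨⟨hup, hpv, hgp⟩, huq, hqv, hgq⟩ := hb
    rcases eq_or_lt_of_le h3 with he | h3'
    · rw [← he] at h5; simp at h5; linarith
    rcases eq_or_lt_of_le h4 with he | h4'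
    · rw [he] at h5
      have hq' : py + m * (qx - px) = qy := hfq
      linarith
    · have := key px x qx hup hqv h3' h4' (by rw [hfp]; linarith) (by rw [hfq]; linarith)
      exact absurd h5 (ne_of_lt this)
  · rintro ⟨_, hb, ⟨x1, h1u, h1v, h1p, h1e⟩, ⟨x2, h2u, h2v, h2q, h2e⟩⟩
    by_cases hc1 : x1 ≤ qx
    · exact ⟨x1, h1u, h1v, h1p, hc1, h1e⟩
    by_cases hc2 : px ≤ x2
    · exact ⟨x2, h2u, h2v, hc2, h2q, h2e⟩
    push_neg at hc1 hc2
    -- x2 < px < qx < x1, g = f at x2 and x1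
    have hgp : g px < py := by
      have := key x2 px x1 h2u h1v hc2 (hpq.trans hc1) (le_of_eq h2e) (le_of_eq h1e)
      rwa [hfp] at this
    have hgq : g qx < qy := by
      have := key x2 qx x1 h2u h1v (hc2.trans hpq) hc1 (le_of_eq h2e) (le_of_eq h1e)
      rwa [hfq] at this
    rcases hb with hb | hb
    · exact absurd ⟨le_of_lt (lt_of_le_of_lt h2u hc2),
        le_trans (le_of_lt (hpq.trans hc1)) h1v, hgp⟩ hb
    · exact absurd ⟨le_trans h2u (le_of_lt (hc2.trans hpq)),
        le_trans (le_of_lt hc1) h1v, hgq⟩ hb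
end

section
/- Let τ ⊂ ℝ³ be an open connected set, let Δ be a closed triangle, and call Δ 'wide in τ' if ∂Δ ∩ τ = ∅. Let ψ₁, ψ₂ be subsets of ∂τ, and let C be a path-connected family of segments, each with one endpoint in ψ₁, the other in ψ₂, and relative interior contained in τ (connectedness is with respect to continuous deformation of the endpoint pairs through such segments). Suppose Δ is wide in τ, Δ ∩ (ψ₁ ∪ ψ₂) = ∅, and some segment e₀ ∈ C intersects Δ transversally in a single point. Then every segment e ∈ C intersects Δ. -/
open Finset

local notation "E3" => EuclideanSpace ℝ (Fin 3)

lemma tri_exists_rep {A B C : E3} {y : E3} (hy : y ∈ convexHull ℝ ({A, B, C} : Set E3)) :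
    ∃ ω : Fin 3 → ℝ, (∀ i, 0 ≤ ω i) ∧ (∑ i, ω i = 1) ∧
      y = Finset.univ.affineCombination ℝ ![A, B, C] ω := by
  classical
  have hr : ({A, B, C} : Set E3) = Set.range ![A, B, C] := by
    ext z; simp [Matrix.range_cons, Matrix.range_empty]; tauto
  rw [hr, convexHull_range_eq_exists_affineCombination] at hy
  obtain ⟨s, w, hw0, hw1, hwy⟩ := hy
  refine ⟨Set.indicator ↑s w, ?_, ?_, ?_⟩
  · intro i
    by_cases hi : i ∈ s
    · simp [Set.indicator_apply, hi, hw0 i hi]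
    · simp [Set.indicator_apply, hi]
  · rwa [← Finset.sum_indicator_subset w (Finset.subset_univ s)] at hw1
  · rw [← hwy, Finset.affineCombination_indicator_subset w _ (Finset.subset_univ s)]

lemma tri_coord_combo (b : AffineBasis (Fin 4) ℝ E3) {A B C : E3}
    (h0 : b 0 = A) (h1 : b 1 = B) (h2 : b 2 = C)
    (ω : Fin 3 → ℝ) (hω : ∑ i, ω i = 1) (j : Fin 4) :
    b.coord j (Finset.univ.affineCombination ℝ ![A, B, C] ω) = ![ω 0, ω 1, ω 2, 0] j := by
  classical
  rw [Finset.map_affineCombination _ _ _ hω,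
    Finset.affineCombination_eq_linear_combination _ _ _ hω, Fin.sum_univ_three]
  subst h0 h1 h2
  fin_cases j <;>
    simp (config := {decide := true}) [AffineBasis.coord_apply]

lemma tri_mem_of_coords (b : AffineBasis (Fin 4) ℝ E3) {A B C : E3}
    (h0 : b 0 = A) (h1 : b 1 = B) (h2 : b 2 = C) (y : E3)
    (hy0 : 0 ≤ b.coord 0 y) (hy1 : 0 ≤ b.coord 1 y) (hy2 : 0 ≤ b.coord 2 y)
    (hy3 : b.coord 3 y = 0) :
    y ∈ convexHull ℝ ({A, B, C} : Set E3) := by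
  classical
  have hsum4 : ∑ i, b.coord i y = 1 := b.sum_coord_apply_eq_one y
  have hsum3 : b.coord 0 y + b.coord 1 y + b.coord 2 y = 1 := by
    rw [Fin.sum_univ_four] at hsum4; linarith
  have hw1 : ∑ i, (![b.coord 0 y, b.coord 1 y, b.coord 2 y] : Fin 3 → ℝ) i = 1 := by
    rw [Fin.sum_univ_three]; simpa using hsum3
  have hmem := affineCombination_mem_convexHull (R := ℝ) (s := (Finset.univ : Finset (Fin 3)))
      (v := ![A, B, C]) (w := ![b.coord 0 y, b.coord 1 y, b.coord 2 y])
      (by intro i _; fin_cases i <;> simpa) hw1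
  have hrange : Set.range ![A, B, C] = ({A, B, C} : Set E3) := by
    ext z; simp [Matrix.range_cons, Matrix.range_empty]; tauto
  rw [hrange] at hmem
  have hself := b.affineCombination_coord_eq_self y
  rw [Finset.affineCombination_eq_linear_combination _ _ _ hsum4, Fin.sum_univ_four] at hself
  rw [Finset.affineCombination_eq_linear_combination _ _ _ hw1, Fin.sum_univ_three] at hmem
  subst h0 h1 h2
  rw [hy3] at hself
  simp only [zero_smul, add_zero] at hself
  simpa [hself] using hmem

lemma tri_edge_of_coord_zero (b : AffineBasis (Fin 4) ℝ E3) {A B C : E3}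
    (h0 : b 0 = A) (h1 : b 1 = B) (h2 : b 2 = C) {y : E3}
    (hy : y ∈ convexHull ℝ ({A, B, C} : Set E3))
    (hz : b.coord 0 y = 0 ∨ b.coord 1 y = 0 ∨ b.coord 2 y = 0) :
    y ∈ segment ℝ A B ∪ segment ℝ B C ∪ segment ℝ C A := by
  classical
  obtain ⟨ω, hω0, hω1, rfl⟩ := tri_exists_rep hy
  have hc := fun j => tri_coord_combo b h0 h1 h2 ω hω1 j
  rw [hc 0, hc 1, hc 2] at hz
  simp only [show (![ω 0, ω 1, ω 2, 0] : Fin 4 → ℝ) 0 = ω 0 from rfl,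
    show (![ω 0, ω 1, ω 2, 0] : Fin 4 → ℝ) 1 = ω 1 from rfl,
    show (![ω 0, ω 1, ω 2, 0] : Fin 4 → ℝ) 2 = ω 2 from rfl] at hz
  have hexp : Finset.univ.affineCombination ℝ ![A, B, C] ω = ω 0 • A + ω 1 • B + ω 2 • C := by
    rw [Finset.affineCombination_eq_linear_combination _ _ _ hω1, Fin.sum_univ_three]; simp
  rw [Fin.sum_univ_three] at hω1
  rcases hz with h | h | h
  · refine Or.inl (Or.inr ⟨ω 1, ω 2, hω0 1, hω0 2, by linarith, ?_⟩)
    rw [hexp, h]; simp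
  · refine Or.inr ⟨ω 2, ω 0, hω0 2, hω0 0, by linarith, ?_⟩
    rw [hexp, h]; simp; abel
  · refine Or.inl (Or.inl ⟨ω 0, ω 1, hω0 0, hω0 1, by linarith, ?_⟩)
    rw [hexp, h]; simp

lemma tri_coords_of_mem (b : AffineBasis (Fin 4) ℝ E3) {A B C : E3}
    (h0 : b 0 = A) (h1 : b 1 = B) (h2 : b 2 = C) {y : E3}
    (hy : y ∈ convexHull ℝ ({A, B, C} : Set E3)) :
    0 ≤ b.coord 0 y ∧ 0 ≤ b.coord 1 y ∧ 0 ≤ b.coord 2 y ∧ b.coord 3 y = 0 := by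
  obtain ⟨ω, hω0, hω1, rfl⟩ := tri_exists_rep hy
  have hc := fun j => tri_coord_combo b h0 h1 h2 ω hω1 j
  exact ⟨by rw [hc 0]; exact hω0 0, by rw [hc 1]; exact hω0 1,
    by rw [hc 2]; exact hω0 2, by rw [hc 3]; rfl⟩

set_option maxHeartbeats 1600000 in
/-- Lemma (cross): if a triangle Δ is wide in an open connected cell τ
(∂Δ ∩ τ = ∅), Δ is disjoint from the trapezoids ψ₁, ψ₂ ⊆ ∂τ, and some segment
e₀ of a path-connected family C of segments (one endpoint in ψ₁, the other in
ψ₂, relative interior in τ) crosses Δ transversally in a single point, then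
every segment of C intersects Δ. -/
theorem wide_triangle_crossed_by_all_segments
    (τ ψ₁ ψ₂ : Set (EuclideanSpace ℝ (Fin 3)))
    (hτo : IsOpen τ) (hτc : IsConnected τ)
    (hψ₁ : ψ₁ ⊆ frontier τ) (hψ₂ : ψ₂ ⊆ frontier τ)
    (C : Set (EuclideanSpace ℝ (Fin 3) × EuclideanSpace ℝ (Fin 3)))
    (hC : ∀ e ∈ C, e.1 ∈ ψ₁ ∧ e.2 ∈ ψ₂ ∧ openSegment ℝ e.1 e.2 ⊆ τ)
    (hCconn : IsPathConnected C)
    (A B P : EuclideanSpace ℝ (Fin 3))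
    (hindep : AffineIndependent ℝ ![A, B, P])
    (Δ : Set (EuclideanSpace ℝ (Fin 3)))
    (hΔ : Δ = convexHull ℝ {A, B, P})
    (hwide : (segment ℝ A B ∪ segment ℝ B P ∪ segment ℝ P A) ∩ τ = ∅)
    (hdisj : Δ ∩ (ψ₁ ∪ ψ₂) = ∅)
    (e₀ : EuclideanSpace ℝ (Fin 3) × EuclideanSpace ℝ (Fin 3)) (he₀ : e₀ ∈ C)
    (htrans : ¬ segment ℝ e₀.1 e₀.2 ⊆ (affineSpan ℝ {A, B, P} : Set (EuclideanSpace ℝ (Fin 3))) ∧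
      ∃ x, segment ℝ e₀.1 e₀.2 ∩ Δ = {x} ∧ x ∈ intrinsicInterior ℝ Δ) :
    ∀ e ∈ C, (segment ℝ e.1 e.2 ∩ Δ).Nonempty := by
  classical
  obtain ⟨-, x₀, hx₀eq, -⟩ := htrans
  have hΔclosed : IsClosed Δ := by
    rw [hΔ]; exact ((Set.toFinite _).isCompact_convexHull ℝ).isClosed
  -- construct an affine basis A, B, P, Q of ℝ³
  have hr3 : Set.range ![A, B, P] = ({A, B, P} : Set E3) := by
    ext z; simp [Matrix.range_cons, Matrix.range_empty]; tauto
  have hspan_ne : affineSpan ℝ ({A, B, P} : Set E3) ≠ ⊤ := by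
    intro htop
    have h1 : Module.finrank ℝ (vectorSpan ℝ (Set.range ![A, B, P])) = 2 :=
      hindep.finrank_vectorSpan (by simp)
    rw [hr3, AffineSubspace.vectorSpan_eq_top_of_affineSpan_eq_top ℝ _ _ htop, finrank_top] at h1
    rw [finrank_euclideanSpace_fin] at h1
    norm_num at h1
  obtain ⟨Q, hQ⟩ : ∃ q, q ∉ affineSpan ℝ ({A, B, P} : Set E3) := by
    by_contra hq
    push_neg at hq
    exact hspan_ne (eq_top_iff.mpr fun y _ => hq y)
  have hind4 : AffineIndependent ℝ ![A, B, P, Q] := by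
    apply AffineIndependent.affineIndependent_of_notMem_span (i := (3 : Fin 4))
    · have hcomp := hindep.comp_embedding
        (⟨fun x : {y : Fin 4 // y ≠ 3} => (⟨(x : Fin 4).1, by
            have h4 := (x : Fin 4).isLt
            have h3 : ((x : Fin 4) : ℕ) ≠ 3 := fun h => x.2 (Fin.ext h)
            omega⟩ : Fin 3),
         fun x y hxy => Subtype.ext (Fin.ext (by simpa [Fin.ext_iff] using hxy))⟩ :
           {y : Fin 4 // y ≠ 3} ↪ Fin 3)
      convert hcomp using 1
      case e'_4 => rfl
      funext x
      obtain ⟨⟨n, hn⟩, hx3⟩ := x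
      have hn3 : n ≠ 3 := fun h => hx3 (Fin.ext h)
      interval_cases n <;> first | rfl | exact absurd rfl hn3
    · intro hmem
      apply hQ
      have himg : ![A, B, P, Q] '' {x : Fin 4 | x ≠ 3} ⊆ ({A, B, P} : Set E3) := by
        rintro y ⟨j, hj, rfl⟩
        obtain ⟨n, hn⟩ := j
        have hn3 : n ≠ 3 := fun h => hj (Fin.ext h)
        interval_cases n
        · exact Or.inl rfl
        · exact Or.inr (Or.inl rfl)
        · exact Or.inr (Or.inr rfl)
        · exact absurd rfl hn3
      exact affineSpan_mono ℝ himg hmem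
  have htop4 : affineSpan ℝ (Set.range ![A, B, P, Q]) = ⊤ := by
    rw [hind4.affineSpan_eq_top_iff_card_eq_finrank_add_one]
    simp [finrank_euclideanSpace_fin]
  let b : AffineBasis (Fin 4) ℝ E3 := ⟨![A, B, P, Q], hind4, htop4⟩
  have hb0 : b 0 = A := rfl
  have hb1 : b 1 = B := rfl
  have hb2 : b 2 = P := rfl
  have hwcont : ∀ i, Continuous fun y => b.coord i y :=
    fun i => (b.coord i).continuous_of_finiteDimensional
  -- membership criteria
  have Kmem : ∀ y, 0 ≤ b.coord 0 y → 0 ≤ b.coord 1 y → 0 ≤ b.coord 2 y →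
      b.coord 3 y = 0 → y ∈ Δ := by
    intro y a0 a1 a2 a3
    rw [hΔ]; exact tri_mem_of_coords b hb0 hb1 hb2 y a0 a1 a2 a3
  have Kcoords : ∀ y ∈ Δ, 0 ≤ b.coord 0 y ∧ 0 ≤ b.coord 1 y ∧ 0 ≤ b.coord 2 y ∧
      b.coord 3 y = 0 := by
    intro y hy; exact tri_coords_of_mem b hb0 hb1 hb2 (hΔ ▸ hy)
  have Kpos : ∀ y ∈ Δ, y ∈ τ → 0 < b.coord 0 y ∧ 0 < b.coord 1 y ∧ 0 < b.coord 2 y := by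
    intro y hy hyτ
    obtain ⟨a0, a1, a2, -⟩ := Kcoords y hy
    have h : ¬ (b.coord 0 y = 0 ∨ b.coord 1 y = 0 ∨ b.coord 2 y = 0) := by
      intro hz
      have hy' := tri_edge_of_coord_zero b hb0 hb1 hb2 (hΔ ▸ hy) hz
      have hco : y ∈ (segment ℝ A B ∪ segment ℝ B P ∪ segment ℝ P A) ∩ τ := ⟨hy', hyτ⟩
      rw [hwide] at hco
      exact hco
    push_neg at h
    exact ⟨lt_of_le_of_ne a0 (Ne.symm h.1), lt_of_le_of_ne a1 (Ne.symm h.2.1),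
      lt_of_le_of_ne a2 (Ne.symm h.2.2)⟩
  have hnotΔ : ∀ e ∈ C, e.1 ∉ Δ ∧ e.2 ∉ Δ := by
    intro e he
    obtain ⟨h1, h2, -⟩ := hC e he
    refine ⟨fun hm => ?_, fun hm => ?_⟩
    · have h3 : e.1 ∈ Δ ∩ (ψ₁ ∪ ψ₂) := ⟨hm, Or.inl h1⟩
      rw [hdisj] at h3; exact h3
    · have h3 : e.2 ∈ Δ ∩ (ψ₁ ∪ ψ₂) := ⟨hm, Or.inr h2⟩
      rw [hdisj] at h3; exact h3
  -- the crossing point and the open set O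
  set cr : E3 × E3 → E3 := fun e =>
    AffineMap.lineMap e.1 e.2 (b.coord 3 e.1 / (b.coord 3 e.1 - b.coord 3 e.2)) with hcr
  set O : Set (E3 × E3) := {e | b.coord 3 e.1 * b.coord 3 e.2 < 0 ∧
    0 < b.coord 0 (cr e) ∧ 0 < b.coord 1 (cr e) ∧ 0 < b.coord 2 (cr e)} with hO
  -- O is open
  have hUopen : IsOpen {e : E3 × E3 | b.coord 3 e.1 * b.coord 3 e.2 < 0} :=
    isOpen_lt (((hwcont 3).comp continuous_fst).mul ((hwcont 3).comp continuous_snd))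
      continuous_const
  have hden : ∀ e ∈ {e : E3 × E3 | b.coord 3 e.1 * b.coord 3 e.2 < 0},
      b.coord 3 e.1 - b.coord 3 e.2 ≠ 0 := by
    intro e he hz
    simp only [Set.mem_setOf_eq] at he
    have heq : b.coord 3 e.1 = b.coord 3 e.2 := by linarith
    rw [heq] at he
    exact absurd he (not_lt.mpr (mul_self_nonneg _))
  have hcrcont : ContinuousOn cr {e : E3 × E3 | b.coord 3 e.1 * b.coord 3 e.2 < 0} := by
    have hc1 : ContinuousOn (fun e : E3 × E3 =>
        (b.coord 3 e.1 / (b.coord 3 e.1 - b.coord 3 e.2)) • (e.2 - e.1) + e.1)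
        {e : E3 × E3 | b.coord 3 e.1 * b.coord 3 e.2 < 0} := by
      apply ContinuousOn.add
      · apply ContinuousOn.fun_smul
        · exact ContinuousOn.div ((hwcont 3).comp continuous_fst).continuousOn
            (((hwcont 3).comp continuous_fst).sub ((hwcont 3).comp continuous_snd)).continuousOn
            hden
        · exact (continuous_snd.sub continuous_fst).continuousOn
      · exact continuous_fst.continuousOn
    exact hc1.congr fun e _ => by
      simp [hcr, AffineMap.lineMap_apply, vsub_eq_sub, vadd_eq_add]
  have hG : IsOpen {y : E3 | 0 < b.coord 0 y ∧ 0 < b.coord 1 y ∧ 0 < b.coord 2 y} := by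
    have : {y : E3 | 0 < b.coord 0 y ∧ 0 < b.coord 1 y ∧ 0 < b.coord 2 y}
        = {y : E3 | 0 < b.coord 0 y} ∩ ({y : E3 | 0 < b.coord 1 y} ∩ {y : E3 | 0 < b.coord 2 y}) := rfl
    rw [this]
    exact (isOpen_lt continuous_const (hwcont 0)).inter
      ((isOpen_lt continuous_const (hwcont 1)).inter (isOpen_lt continuous_const (hwcont 2)))
  have hOopen : IsOpen O := by
    have hOeq : O = {e : E3 × E3 | b.coord 3 e.1 * b.coord 3 e.2 < 0} ∩
        cr ⁻¹' {y : E3 | 0 < b.coord 0 y ∧ 0 < b.coord 1 y ∧ 0 < b.coord 2 y} := rfl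
    rw [hOeq]
    exact hcrcont.isOpen_inter_preimage hUopen hG
  -- membership in O implies the segment meets Δ
  have hO_inter : ∀ e : E3 × E3, e ∈ O → (segment ℝ e.1 e.2 ∩ Δ).Nonempty := by
    rintro ⟨a, c⟩ ⟨hprod, hc0, hc1, hc2⟩
    have hα : b.coord 3 a ≠ 0 := by
      intro h; rw [h, zero_mul] at hprod; exact lt_irrefl _ hprod
    have hd : b.coord 3 a - b.coord 3 c ≠ 0 := by
      intro h
      have heq : b.coord 3 a = b.coord 3 c := by linarith
      rw [heq] at hprod
      exact absurd hprod (not_lt.mpr (mul_self_nonneg _))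
    have ht01 : 0 < b.coord 3 a / (b.coord 3 a - b.coord 3 c) ∧
        b.coord 3 a / (b.coord 3 a - b.coord 3 c) < 1 := by
      rcases lt_or_gt_of_ne hα with hneg | hpos
      · have hγ : 0 < b.coord 3 c := by nlinarith [hprod]
        constructor
        · exact div_pos_iff.mpr (Or.inr ⟨hneg, by linarith⟩)
        · rw [div_lt_one_iff]
          exact Or.inr (Or.inr ⟨by linarith, by linarith⟩)
      · have hγ : b.coord 3 c < 0 := by nlinarith [hprod]
        constructor
        · exact div_pos hpos (by linarith)
        · exact (div_lt_one (by linarith)).mpr (by linarith)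
    have hx3 : b.coord 3 (cr (a, c)) = 0 := by
      rw [hcr]
      rw [(b.coord 3).apply_lineMap, AffineMap.lineMap_apply, smul_eq_mul, vsub_eq_sub,
        vadd_eq_add]
      field_simp
      ring
    have hxseg : cr (a, c) ∈ segment ℝ a c := by
      rw [segment_eq_image_lineMap]
      exact ⟨_, ⟨le_of_lt ht01.1, le_of_lt ht01.2⟩, rfl⟩
    exact ⟨cr (a, c), hxseg, Kmem _ (le_of_lt hc0) (le_of_lt hc1) (le_of_lt hc2) hx3⟩
  -- for segments of the family, meeting Δ implies membership in O
  have hC_inter_O : ∀ e ∈ C, (segment ℝ e.1 e.2 ∩ Δ).Nonempty → e ∈ O := by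
    rintro ⟨a, c⟩ he ⟨x, hxseg, hxΔ⟩
    obtain ⟨-, -, hsub⟩ := hC _ he
    obtain ⟨hnA, hnC⟩ := hnotΔ _ he
    rw [segment_eq_image_lineMap] at hxseg
    obtain ⟨s, hs01, rfl⟩ := hxseg
    have hs0 : s ≠ 0 := by
      rintro rfl; rw [AffineMap.lineMap_apply_zero] at hxΔ; exact hnA hxΔ
    have hs1 : s ≠ 1 := by
      rintro rfl; rw [AffineMap.lineMap_apply_one] at hxΔ; exact hnC hxΔ
    have hs0' : 0 < s := lt_of_le_of_ne hs01.1 (Ne.symm hs0)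
    have hs1' : s < 1 := lt_of_le_of_ne hs01.2 hs1
    have hxτ : (AffineMap.lineMap a c) s ∈ τ := by
      apply hsub
      rw [openSegment_eq_image_lineMap]
      exact ⟨s, ⟨hs0', hs1'⟩, rfl⟩
    have hxpos := Kpos _ hxΔ hxτ
    have hx3 : b.coord 3 ((AffineMap.lineMap a c) s) = 0 := (Kcoords _ hxΔ).2.2.2
    rw [(b.coord 3).apply_lineMap, AffineMap.lineMap_apply, smul_eq_mul, vsub_eq_sub,
      vadd_eq_add] at hx3
    -- not both endpoint coordinates vanish
    have hnotboth : ¬ (b.coord 3 a = 0 ∧ b.coord 3 c = 0) := by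
      rintro ⟨hza, hzc⟩
      have hlc : Continuous fun u : ℝ => (AffineMap.lineMap a c : ℝ →ᵃ[ℝ] E3) u :=
        (AffineMap.lineMap a c : ℝ →ᵃ[ℝ] E3).continuous_of_finiteDimensional
      set m : ℝ → ℝ := fun u => min (b.coord 0 ((AffineMap.lineMap a c) u))
        (min (b.coord 1 ((AffineMap.lineMap a c) u))
          (b.coord 2 ((AffineMap.lineMap a c) u))) with hm
      have hmc : Continuous m :=
        (((hwcont 0).comp hlc).min (((hwcont 1).comp hlc).min ((hwcont 2).comp hlc)))
      have hm0 : m 0 < 0 := by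
        by_contra hge
        push_neg at hge
        apply hnA
        have hA0 : 0 ≤ b.coord 0 a := by
          have := le_trans hge (min_le_left _ _)
          rwa [AffineMap.lineMap_apply_zero] at this
        have hA1 : 0 ≤ b.coord 1 a := by
          have := le_trans hge (le_trans (min_le_right _ _) (min_le_left _ _))
          rwa [AffineMap.lineMap_apply_zero] at this
        have hA2 : 0 ≤ b.coord 2 a := by
          have := le_trans hge (le_trans (min_le_right _ _) (min_le_right _ _))
          rwa [AffineMap.lineMap_apply_zero] at this
        exact Kmem a hA0 hA1 hA2 hza
      have hms : 0 < m s := lt_min hxpos.1 (lt_min hxpos.2.1 hxpos.2.2)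
      obtain ⟨u, hu, hmu⟩ := intermediate_value_Ioo (le_of_lt hs0') hmc.continuousOn
        (⟨hm0, hms⟩ : (0:ℝ) ∈ Set.Ioo (m 0) (m s))
      have hy3 : b.coord 3 ((AffineMap.lineMap a c) u) = 0 := by
        rw [(b.coord 3).apply_lineMap, hza, hzc]
        simp [AffineMap.lineMap_apply]
      have hy0 : 0 ≤ b.coord 0 ((AffineMap.lineMap a c) u) := by
        rw [← hmu]; exact min_le_left _ _
      have hy1 : 0 ≤ b.coord 1 ((AffineMap.lineMap a c) u) := by
        rw [← hmu]; exact le_trans (min_le_right _ _) (min_le_left _ _)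
      have hy2 : 0 ≤ b.coord 2 ((AffineMap.lineMap a c) u) := by
        rw [← hmu]; exact le_trans (min_le_right _ _) (min_le_right _ _)
      have hyΔ : (AffineMap.lineMap a c) u ∈ Δ := Kmem _ hy0 hy1 hy2 hy3
      have hzero : b.coord 0 ((AffineMap.lineMap a c) u) = 0 ∨
          b.coord 1 ((AffineMap.lineMap a c) u) = 0 ∨
          b.coord 2 ((AffineMap.lineMap a c) u) = 0 := by
        by_contra hcon
        push_neg at hcon
        obtain ⟨n0, n1, n2⟩ := hcon
        have hpos' : 0 < m u := lt_min (lt_of_le_of_ne hy0 (Ne.symm n0))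
          (lt_min (lt_of_le_of_ne hy1 (Ne.symm n1)) (lt_of_le_of_ne hy2 (Ne.symm n2)))
        rw [hmu] at hpos'
        exact lt_irrefl _ hpos'
      have hedge := tri_edge_of_coord_zero b hb0 hb1 hb2 (hΔ ▸ hyΔ) hzero
      have hyτ : (AffineMap.lineMap a c) u ∈ τ := by
        apply hsub
        rw [openSegment_eq_image_lineMap]
        exact ⟨u, ⟨hu.1, lt_trans hu.2 hs1'⟩, rfl⟩
      have hcontra : (AffineMap.lineMap a c) u ∈
          (segment ℝ A B ∪ segment ℝ B P ∪ segment ℝ P A) ∩ τ := ⟨hedge, hyτ⟩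
      rw [hwide] at hcontra
      exact hcontra
    have hα : b.coord 3 a ≠ 0 := by
      intro h
      apply hnotboth
      refine ⟨h, ?_⟩
      rw [h] at hx3
      have hsc : s * b.coord 3 c = 0 := by linarith [hx3]
      rcases mul_eq_zero.mp hsc with h' | h'
      · exact absurd h' hs0
      · exact h'
    have hγ : b.coord 3 c ≠ 0 := by
      intro h
      apply hnotboth
      refine ⟨?_, h⟩
      rw [h] at hx3
      have hsa : (1 - s) * b.coord 3 a = 0 := by ring_nf; ring_nf at hx3; linarith [hx3]
      rcases mul_eq_zero.mp hsa with h' | h'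
      · exact absurd (by linarith : s = 1) hs1
      · exact h'
    have hprod : b.coord 3 a * b.coord 3 c < 0 := by
      have hb2' : 0 < b.coord 3 c ^ 2 := lt_of_le_of_ne (sq_nonneg _) (Ne.symm (pow_ne_zero 2 hγ))
      have hkey : s * (b.coord 3 c - b.coord 3 a) * (b.coord 3 c) +
          (b.coord 3 a) * (b.coord 3 c) = 0 := by linear_combination (b.coord 3 c) * hx3
      nlinarith [hkey, mul_pos hs0' hb2', hs1']
    have hd : b.coord 3 a - b.coord 3 c ≠ 0 := by
      intro h
      have heq : b.coord 3 a = b.coord 3 c := by linarith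
      rw [heq] at hprod
      exact absurd hprod (not_lt.mpr (mul_self_nonneg _))
    have hts : b.coord 3 a / (b.coord 3 a - b.coord 3 c) = s := by
      rw [div_eq_iff hd]
      linear_combination hx3
    have hcrx : cr (a, c) = (AffineMap.lineMap a c) s := by rw [hcr]; simp only; rw [hts]
    exact ⟨hprod, by rw [hcrx]; exact hxpos.1, by rw [hcrx]; exact hxpos.2.1,
      by rw [hcrx]; exact hxpos.2.2⟩
  -- clopen argument along a path in C
  intro e he
  obtain ⟨γp, hγp⟩ := hCconn.joinedIn e₀ he₀ e he
  set S : Set unitInterval := {t | (segment ℝ (γp t).1 (γp t).2 ∩ Δ).Nonempty} with hS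
  have hSO : S = γp ⁻¹' O := by
    ext t
    exact ⟨fun ht => hC_inter_O _ (hγp t) ht, fun ht => hO_inter _ ht⟩
  have hSopen : IsOpen S := by rw [hSO]; exact hOopen.preimage γp.continuous
  have hSclosed : IsClosed S := by
    set F : unitInterval × unitInterval → E3 :=
      fun p => (AffineMap.lineMap (γp p.1).1 (γp p.1).2) (p.2 : ℝ) with hF
    have hFc : Continuous F := by
      have h1 : Continuous fun p : unitInterval × unitInterval => (γp p.1).1 :=
        (γp.continuous.comp continuous_fst).fst
      have h2 : Continuous fun p : unitInterval × unitInterval => (γp p.1).2 :=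
        (γp.continuous.comp continuous_fst).snd
      have h3 : Continuous fun p : unitInterval × unitInterval => ((p.2 : ℝ)) :=
        continuous_subtype_val.comp continuous_snd
      have h4 : Continuous fun p : unitInterval × unitInterval =>
          ((p.2 : ℝ) • ((γp p.1).2 - (γp p.1).1) + (γp p.1).1) := (h3.smul (h2.sub h1)).add h1
      exact h4.congr fun p => by
        simp [hF, AffineMap.lineMap_apply, vsub_eq_sub, vadd_eq_add]
    have hK : IsClosed (F ⁻¹' Δ) := hΔclosed.preimage hFc
    have hSK : S = Prod.fst '' (F ⁻¹' Δ) := by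
      ext t
      constructor
      · rintro ⟨x, hxseg, hxΔ⟩
        rw [segment_eq_image_lineMap] at hxseg
        obtain ⟨u, hu, rfl⟩ := hxseg
        exact ⟨(t, ⟨u, hu⟩), hxΔ, rfl⟩
      · rintro ⟨⟨t', u⟩, hmem, rfl⟩
        refine ⟨F (t', u), ?_, hmem⟩
        rw [segment_eq_image_lineMap]
        exact ⟨(u : ℝ), u.2, rfl⟩
    rw [hSK]
    exact (hK.isCompact.image continuous_fst).isClosed
  have hne : S.Nonempty := by
    refine ⟨0, ?_⟩
    show (segment ℝ (γp 0).1 (γp 0).2 ∩ Δ).Nonempty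
    rw [γp.source, hx₀eq]
    exact ⟨x₀, rfl⟩
  have hSuniv : S = Set.univ := IsClopen.eq_univ ⟨hSclosed, hSopen⟩ hne
  have h1S : (1 : unitInterval) ∈ S := hSuniv ▸ Set.mem_univ _
  have : (segment ℝ (γp 1).1 (γp 1).2 ∩ Δ).Nonempty := h1S
  rwa [γp.target] at this
end

section
/- Under the hypotheses of the previous setup, if in addition a triangle Δ wide in τ with Δ ∩ (ψ₁ ∪ ψ₂) = ∅ intersects some segment e ∈ C, then Δ intersects every segment of C; consequently the set T_C of wide triangles disjoint from ψ₁ ∪ ψ₂ that are intersected by all segments of C equals the set of such triangles intersected by any single fixed segment e₀ ∈ C, and is independent of the choice of e₀. -/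
abbrev Pt3 := EuclideanSpace ℝ (Fin 3)

/-- The closed triangle spanned by a triple of points. -/
def triOf (t : Pt3 × Pt3 × Pt3) : Set Pt3 := convexHull ℝ {t.1, t.2.1, t.2.2}

/-- The boundary (union of edges) of the triangle spanned by a triple. -/
def triBdOf (t : Pt3 × Pt3 × Pt3) : Set Pt3 :=
  segment ℝ t.1 t.2.1 ∪ segment ℝ t.2.1 t.2.2 ∪ segment ℝ t.2.2 t.1

open Set Topology


lemma exists_coords (P₁ P₂ P₃ : Pt3) (h : AffineIndependent ℝ ![P₁, P₂, P₃]) :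
    ∃ β γ f : Pt3 → ℝ, Continuous β ∧ Continuous γ ∧ Continuous f ∧
      (∀ p q : Pt3, ∀ s : ℝ, β ((1-s) • p + s • q) = (1-s) * β p + s * β q) ∧
      (∀ p q : Pt3, ∀ s : ℝ, γ ((1-s) • p + s • q) = (1-s) * γ p + s * γ q) ∧
      (∀ p q : Pt3, ∀ s : ℝ, f ((1-s) • p + s • q) = (1-s) * f p + s * f q) ∧
      (∀ y ∈ convexHull ℝ ({P₁, P₂, P₃} : Set Pt3),
        f y = 0 ∧ 0 ≤ β y ∧ 0 ≤ γ y ∧ β y + γ y ≤ 1) ∧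
      (∀ y : Pt3, f y = 0 → 0 ≤ β y → 0 ≤ γ y → β y + γ y ≤ 1 →
        y ∈ convexHull ℝ ({P₁, P₂, P₃} : Set Pt3)) ∧
      (∀ y ∈ convexHull ℝ ({P₁, P₂, P₃} : Set Pt3),
        (β y = 0 ∨ γ y = 0 ∨ β y + γ y = 1) →
        y ∈ segment ℝ P₁ P₂ ∪ segment ℝ P₂ P₃ ∪ segment ℝ P₃ P₁) := by
  classical
  have hull_eq : convexHull ℝ ({P₁, P₂, P₃} : Set Pt3)
      = ⋃ z ∈ segment ℝ P₂ P₃, segment ℝ P₁ z := by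
    rw [convexHull_insert ⟨P₂, by simp⟩, convexHull_pair, convexJoin_singleton_left]
  set u : Pt3 := P₂ - P₁ with hu
  set v : Pt3 := P₃ - P₁ with hv
  have li2 : LinearIndependent ℝ ![u, v] := by
    rw [LinearIndependent.pair_iff]
    intro s t hst
    have h2 := affineIndependent_iff.1 h Finset.univ ![-(s+t), s, t]
      (by simp [Fin.sum_univ_three])
      (by
        simp only [Fin.sum_univ_three, Matrix.cons_val_zero, Matrix.cons_val_one,
          Matrix.head_cons, Matrix.cons_val_two, Matrix.tail_cons]
        rw [← hst, hu, hv]; module)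
    exact ⟨by simpa using h2 1 (Finset.mem_univ _), by simpa using h2 2 (Finset.mem_univ _)⟩
  obtain ⟨w, li3⟩ : ∃ w, LinearIndependent ℝ ![u, v, w] := by
    have hlt : Submodule.span ℝ ({u, v} : Set Pt3) < ⊤ := by
      apply span_lt_top_of_card_lt_finrank
      have h2 : ({u, v} : Set Pt3).toFinset.card ≤ 2 := by
        rw [Set.toFinset_insert]
        exact (Finset.card_insert_le _ _).trans (by simp)
      have h3 : Module.finrank ℝ Pt3 = 3 := finrank_euclideanSpace_fin
      omega
    obtain ⟨w, -, hw⟩ := SetLike.exists_of_lt hlt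
    refine ⟨w, ?_⟩
    have he : (![u, v, w] : Fin 3 → Pt3) = Fin.snoc ![u, v] w := by
      funext i; fin_cases i <;> simp [Fin.snoc] <;> rfl
    rw [he, linearIndependent_fin_snoc]
    refine ⟨li2, ?_⟩
    have hr : Set.range ![u, v] = {u, v} := by
      simp [Matrix.range_cons, Matrix.range_empty, Set.pair_comm]
    rw [hr]; exact hw
  set B : Module.Basis (Fin 3) ℝ Pt3 :=
    basisOfLinearIndependentOfCardEqFinrank li3
      (by simp [finrank_euclideanSpace_fin]) with hBdef
  have hB : ⇑B = ![u, v, w] := coe_basisOfLinearIndependentOfCardEqFinrank _ _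
  set c : Fin 3 → Pt3 → ℝ := fun i y => B.repr (y - P₁) i with hc
  have hcomp : ∀ a b c' : ℝ, ∀ i, B.repr (a • u + b • v + c' • w) i = ![a, b, c'] i := by
    intro a b c' i
    have hs : a • u + b • v + c' • w = ∑ j, (![a, b, c'] j) • B j := by
      rw [Fin.sum_univ_three, hB]; simp
    rw [hs, B.repr_sum_self]
  have hrep : ∀ y : Pt3, y - P₁ = c 0 y • u + c 1 y • v + c 2 y • w := by
    intro y
    have hs := B.sum_repr (y - P₁)
    rw [Fin.sum_univ_three] at hs
    rw [hc]; simp only [hB] at hs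
    simpa using hs.symm
  have hcont : ∀ i, Continuous (c i) := by
    intro i
    have : Continuous fun y : Pt3 => B.coord i (y - P₁) :=
      (LinearMap.continuous_of_finiteDimensional (B.coord i)).comp
        (continuous_id.sub continuous_const)
    simpa [Module.Basis.coord_apply, hc] using this
  have haff : ∀ i, ∀ p q : Pt3, ∀ s : ℝ,
      c i ((1-s) • p + s • q) = (1-s) * c i p + s * c i q := by
    intro i p q s
    have key : (1-s) • p + s • q - P₁ = (1-s) • (p - P₁) + s • (q - P₁) := by module
    rw [hc]; simp only [key, map_add, map_smul, Finsupp.add_apply, Finsupp.smul_apply,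
      smul_eq_mul]
  -- representation of hull members
  have hmem : ∀ y ∈ convexHull ℝ ({P₁, P₂, P₃} : Set Pt3),
      ∃ q r : ℝ, 0 ≤ q ∧ q ≤ 1 ∧ 0 ≤ r ∧ r ≤ 1 ∧
        y = (1-q) • P₁ + q • (r • P₂ + (1-r) • P₃) ∧
        c 0 y = q * r ∧ c 1 y = q * (1-r) ∧ c 2 y = 0 := by
    intro y hy
    rw [hull_eq, mem_iUnion₂] at hy
    obtain ⟨z, hz, hyz⟩ := hy
    obtain ⟨r₁, r₂, hr₁, hr₂, hr, rfl⟩ := hz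
    obtain ⟨q₁, q₂, hq₁, hq₂, hq, rfl⟩ := hyz
    have e2 : r₂ = 1 - r₁ := by linarith
    subst e2
    have e1 : q₁ = 1 - q₂ := by linarith
    subst e1
    refine ⟨q₂, r₁, hq₂, by linarith, hr₁, by linarith, by module, ?_, ?_, ?_⟩
    · have hd : ((1 - q₂) • P₁ + q₂ • (r₁ • P₂ + (1 - r₁) • P₃)) - P₁
          = (q₂ * r₁) • u + (q₂ * (1 - r₁)) • v + (0:ℝ) • w := by
        rw [hu, hv]; module
      rw [hc]; simp only [hd, hcomp]; simp
    · have hd : ((1 - q₂) • P₁ + q₂ • (r₁ • P₂ + (1 - r₁) • P₃)) - P₁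
          = (q₂ * r₁) • u + (q₂ * (1 - r₁)) • v + (0:ℝ) • w := by
        rw [hu, hv]; module
      rw [hc]; simp only [hd, hcomp]; simp
    · have hd : ((1 - q₂) • P₁ + q₂ • (r₁ • P₂ + (1 - r₁) • P₃)) - P₁
          = (q₂ * r₁) • u + (q₂ * (1 - r₁)) • v + (0:ℝ) • w := by
        rw [hu, hv]; module
      rw [hc]; simp only [hd, hcomp]; simp
  refine ⟨c 0, c 1, c 2, hcont 0, hcont 1, hcont 2, haff 0, haff 1, haff 2, ?_, ?_, ?_⟩
  · -- K1
    intro y hy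
    obtain ⟨q, r, hq0, hq1, hr0, hr1, -, h0, h1, h2⟩ := hmem y hy
    refine ⟨h2, by rw [h0]; exact mul_nonneg hq0 hr0, by rw [h1]; exact mul_nonneg hq0 (by linarith), ?_⟩
    rw [h0, h1]; nlinarith
  · -- K2
    intro y hf hβ hγ hsum
    have hry := hrep y
    rw [hf, zero_smul, add_zero] at hry
    rcases eq_or_lt_of_le (by linarith : (0:ℝ) ≤ c 0 y + c 1 y) with hq | hq
    · have hb0 : c 0 y = 0 := by linarith
      have hg0 : c 1 y = 0 := by linarith
      rw [hb0, hg0, zero_smul, zero_smul, add_zero] at hry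
      rw [sub_eq_zero.mp hry]
      exact subset_convexHull ℝ _ (by simp)
    · rw [hull_eq, mem_iUnion₂]
      obtain ⟨bb, hbb⟩ : ∃ bb, bb = c 0 y := ⟨_, rfl⟩
      obtain ⟨gg, hgg⟩ : ∃ gg, gg = c 1 y := ⟨_, rfl⟩
      rw [← hbb] at hβ hsum hq hry
      rw [← hgg] at hγ hsum hq hry
      have hq' : bb + gg ≠ 0 := ne_of_gt hq
      refine ⟨(1 - gg / (bb + gg)) • P₂ + (gg / (bb + gg)) • P₃,
        ⟨1 - gg / (bb + gg), gg / (bb + gg), ?_, by positivity, by ring, rfl⟩,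
        ⟨1 - (bb + gg), bb + gg, by linarith, by linarith, by ring, ?_⟩⟩
      · have hle : gg / (bb + gg) ≤ 1 := by
          rw [div_le_one hq]; linarith
        linarith
      · have hy' : y = P₁ + bb • u + gg • v := by
          linear_combination (norm := module) hry
        rw [hy', hu, hv]
        match_scalars
        · ring
        · field_simp; ring
        · field_simp
  · -- K3
    intro y hy hdis
    obtain ⟨q, r, hq0, hq1, hr0, hr1, hyeq, h0, h1, h2⟩ := hmem y hy
    rcases hdis with hd | hd | hd
    · rw [h0] at hd
      rcases mul_eq_zero.mp hd with hd | hd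
      · subst hd
        have : y = P₁ := by rw [hyeq]; module
        rw [this]
        exact Or.inr (right_mem_segment ℝ P₃ P₁)
      · subst hd
        have : y = (1-q) • P₁ + q • P₃ := by rw [hyeq]; module
        refine Or.inr ?_
        rw [segment_symm]
        exact ⟨1-q, q, by linarith, hq0, by ring, this.symm⟩
    · rw [h1] at hd
      rcases mul_eq_zero.mp hd with hd | hd
      · subst hd
        have : y = P₁ := by rw [hyeq]; module
        rw [this]
        exact Or.inr (right_mem_segment ℝ P₃ P₁)
      · have hr' : r = 1 := by linarith
        subst hr'
        have : y = (1-q) • P₁ + q • P₂ := by rw [hyeq]; module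
        exact Or.inl (Or.inl ⟨1-q, q, by linarith, hq0, by ring, this.symm⟩)
    · rw [h0, h1] at hd
      have hq' : q = 1 := by nlinarith
      subst hq'
      have : y = r • P₂ + (1-r) • P₃ := by rw [hyeq]; module
      exact Or.inl (Or.inr ⟨r, 1-r, hr0, by linarith, by ring, this.symm⟩)


lemma isClosed_meets (Δ : Set Pt3) (hΔ : IsClosed Δ) :
    IsClosed {e : Pt3 × Pt3 | (segment ℝ e.1 e.2 ∩ Δ).Nonempty} := by
  have heq : {e : Pt3 × Pt3 | (segment ℝ e.1 e.2 ∩ Δ).Nonempty}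
      = Prod.fst '' {p : (Pt3 × Pt3) × unitInterval |
          (1 - (p.2 : ℝ)) • p.1.1 + (p.2 : ℝ) • p.1.2 ∈ Δ} := by
    ext e
    simp only [mem_setOf_eq, Set.mem_image]
    constructor
    · rintro ⟨x, hxseg, hxΔ⟩
      rw [segment_eq_image] at hxseg
      obtain ⟨θ, hθ, rfl⟩ := hxseg
      exact ⟨(e, ⟨θ, hθ⟩), hxΔ, rfl⟩
    · rintro ⟨⟨e', θ⟩, hmem, rfl⟩
      refine ⟨(1 - (θ : ℝ)) • e'.1 + (θ : ℝ) • e'.2, ?_, hmem⟩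
      rw [segment_eq_image]
      exact ⟨θ, θ.2, rfl⟩
  rw [heq]
  apply isClosedMap_fst_of_compactSpace
  exact IsClosed.preimage (by fun_prop) hΔ

lemma tri_meets_all (τ ψ₁ ψ₂ : Set Pt3)
    (C : Set (Pt3 × Pt3))
    (hC : ∀ e ∈ C, e.1 ∈ ψ₁ ∧ e.2 ∈ ψ₂ ∧ openSegment ℝ e.1 e.2 ⊆ τ)
    (hCconn : IsPathConnected C)
    (t : Pt3 × Pt3 × Pt3) (ht : AffineIndependent ℝ ![t.1, t.2.1, t.2.2])
    (hbd : triBdOf t ∩ τ = ∅) (hdisj : triOf t ∩ (ψ₁ ∪ ψ₂) = ∅)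
    (e₀ : Pt3 × Pt3) (he₀ : e₀ ∈ C) (hmeet : (segment ℝ e₀.1 e₀.2 ∩ triOf t).Nonempty) :
    ∀ e ∈ C, (segment ℝ e.1 e.2 ∩ triOf t).Nonempty := by
  obtain ⟨β, γ, f, hβc, hγc, hfc, hβa, hγa, hfa, hK1, hK2, hK3⟩ :=
    exists_coords t.1 t.2.1 t.2.2 ht
  set Δ : Set Pt3 := triOf t with hΔdef
  have hΔcl : IsClosed Δ := ((Set.toFinite _).isCompact_convexHull ℝ).isClosed
  have hstrict : ∀ y, y ∈ Δ → y ∈ τ → 0 < β y ∧ 0 < γ y ∧ β y + γ y < 1 := by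
    intro y hyΔ hyτ
    have hynb : y ∉ (segment ℝ t.1 t.2.1 ∪ segment ℝ t.2.1 t.2.2 ∪ segment ℝ t.2.2 t.1) := by
      intro hy
      have hmem : y ∈ triBdOf t ∩ τ := ⟨hy, hyτ⟩
      rw [hbd] at hmem
      exact hmem
    obtain ⟨hf0, hb, hg, hs⟩ := hK1 y hyΔ
    have hnd : ¬(β y = 0 ∨ γ y = 0 ∨ β y + γ y = 1) := fun hd => hynb (hK3 y hyΔ hd)
    push_neg at hnd
    exact ⟨hb.lt_of_ne (Ne.symm hnd.1), hg.lt_of_ne (Ne.symm hnd.2.1), hs.lt_of_ne hnd.2.2⟩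
  set U : Set Pt3 := {y | 0 < β y} ∩ {y | 0 < γ y} ∩ {y | β y + γ y < 1} with hUdef
  have hUo : IsOpen U :=
    ((isOpen_lt continuous_const hβc).inter (isOpen_lt continuous_const hγc)).inter
      (isOpen_lt (hβc.add hγc) continuous_const)
  have hUΔ : ∀ y, f y = 0 → y ∈ U → y ∈ Δ := by
    rintro y hfy ⟨⟨h1, h2⟩, h3⟩
    exact hK2 y hfy (le_of_lt h1) (le_of_lt h2) (le_of_lt h3)
  set S : Set (Pt3 × Pt3) := {e | (segment ℝ e.1 e.2 ∩ Δ).Nonempty} with hSdef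
  have hScl : IsClosed S := isClosed_meets Δ hΔcl
  have hnhds : ∀ e ∈ C, e ∈ S → S ∈ 𝓝 e := by
    rintro ⟨a, b⟩ heC heS
    obtain ⟨ha1, hb2, hot⟩ := hC _ heC
    obtain ⟨x, hxseg, hxΔ⟩ := heS
    have hax : a ∉ Δ := fun hh =>
      Set.eq_empty_iff_forall_notMem.mp hdisj a ⟨hh, Or.inl ha1⟩
    have hbx : b ∉ Δ := fun hh =>
      Set.eq_empty_iff_forall_notMem.mp hdisj b ⟨hh, Or.inr hb2⟩
    have hxo : x ∈ openSegment ℝ a b := by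
      rw [← insert_endpoints_openSegment] at hxseg
      rcases hxseg with rfl | hxseg
      · exact absurd hxΔ hax
      rcases hxseg with rfl | hxseg
      · exact absurd hxΔ hbx
      exact hxseg
    have hxτ : x ∈ τ := hot hxo
    obtain ⟨hfx, -, -, -⟩ := hK1 x hxΔ
    obtain ⟨hβx, hγx, hsx⟩ := hstrict x hxΔ hxτ
    have hxU : x ∈ U := ⟨⟨hβx, hγx⟩, hsx⟩
    obtain ⟨s₁, s₂, hs₁, hs₂, hssum, hxeq⟩ := hxo
    have e1 : s₁ = 1 - s₂ := by linarith
    subst e1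
    have hfeq : (1 - s₂) * f a + s₂ * f b = 0 := by
      rw [← hfa a b s₂, hxeq]; exact hfx
    by_cases hfa0 : f a = 0
    · -- segment lies in the plane: contradiction
      exfalso
      have hfb0 : f b = 0 := by
        have hz : s₂ * f b = 0 := by rw [hfa0] at hfeq; linarith
        exact (mul_eq_zero.mp hz).resolve_left (ne_of_gt hs₂)
      have hne : a ≠ b := by
        rintro rfl
        have hxa : x = a := by
          rw [← hxeq]; module
        exact hax (hxa ▸ hxΔ)
      have hall0 : ∀ y ∈ openSegment ℝ a b, f y = 0 := by
        rintro y ⟨u₁, u₂, hu₁, hu₂, hu, hyeq⟩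
        have e2 : u₁ = 1 - u₂ := by linarith
        subst e2
        rw [← hyeq, hfa a b u₂, hfa0, hfb0]; ring
      have hsub : openSegment ℝ a b ⊆ Δ := by
        by_contra hns
        rw [Set.not_subset] at hns
        obtain ⟨z, hz, hzn⟩ := hns
        have hcov : openSegment ℝ a b ⊆ U ∪ Δᶜ := by
          intro y hy
          by_cases hyΔ : y ∈ Δ
          · obtain ⟨h1, h2, h3⟩ := hstrict y hyΔ (hot hy)
            exact Or.inl ⟨⟨h1, h2⟩, h3⟩
          · exact Or.inr hyΔ
        have hpre := (convex_openSegment (𝕜 := ℝ) a b).isPreconnected U Δᶜ hUo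
          hΔcl.isOpen_compl hcov ⟨x, by exact ⟨(⟨1 - s₂, s₂, by linarith, hs₂, by ring, hxeq⟩ :
            x ∈ openSegment ℝ a b), hxU⟩⟩ ⟨z, hz, hzn⟩
        obtain ⟨y, hys, hyU, hyV⟩ := hpre
        exact hyV (hUΔ y (hall0 y hys) hyU)
      have haΔ : a ∈ Δ := by
        have h1 : a ∈ closure (openSegment ℝ a b) := by
          rw [closure_openSegment]; exact left_mem_segment ℝ a b
        have h2 := closure_mono hsub
        rw [hΔcl.closure_eq] at h2
        exact h2 h1
      exact hax haΔ
    · -- transversal case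
      have hfb0 : f b ≠ 0 := by
        intro h0
        apply hfa0
        have hz : (1 - s₂) * f a = 0 := by rw [h0] at hfeq; linarith
        exact (mul_eq_zero.mp hz).resolve_left (by linarith)
      have hprod : f a * f b < 0 := by
        rcases lt_trichotomy (f a) 0 with hneg | h0 | hpos
        · have hb' : 0 < f b := by
            rcases lt_trichotomy (f b) 0 with h | h | h
            · nlinarith
            · exact absurd h hfb0
            · exact h
          exact mul_neg_of_neg_of_pos hneg hb'
        · exact absurd h0 hfa0
        · have hb' : f b < 0 := by
            rcases lt_trichotomy (f b) 0 with h | h | h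
            · exact h
            · exact absurd h hfb0
            · nlinarith
          exact mul_neg_of_pos_of_neg hpos hb'
      have keyst : ∀ u v : ℝ, u * v < 0 → 0 < u / (u - v) ∧ u / (u - v) < 1 := by
        intro u v huv
        rcases lt_trichotomy u 0 with h | h | h
        · have hv : 0 < v := by nlinarith
          have hd' : u - v < 0 := by linarith
          exact ⟨div_pos_of_neg_of_neg h hd', by rw [div_lt_one_of_neg hd']; linarith⟩
        · exfalso; rw [h] at huv; simp at huv
        · have hv : v < 0 := by nlinarith
          have hd' : 0 < u - v := by linarith
          exact ⟨div_pos h hd', by rw [div_lt_one hd']; linarith⟩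
      set O : Set (Pt3 × Pt3) := {p | f p.1 * f p.2 < 0} with hOdef
      have hOo : IsOpen O := isOpen_lt
        ((hfc.comp continuous_fst).mul (hfc.comp continuous_snd)) continuous_const
      have hdne : ∀ p ∈ O, f p.1 - f p.2 ≠ 0 := by
        intro p hp heq0
        have hp' : f p.1 * f p.2 < 0 := hp
        nlinarith [mul_self_nonneg (f p.1), mul_self_nonneg (f p.1 - f p.2), mul_self_nonneg (f p.1 + f p.2)]
      set χ : Pt3 × Pt3 → Pt3 := fun p =>
        (1 - f p.1 / (f p.1 - f p.2)) • p.1 + (f p.1 / (f p.1 - f p.2)) • p.2 with hχdef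
      have hratc : ContinuousOn (fun p : Pt3 × Pt3 => f p.1 / (f p.1 - f p.2)) O :=
        ContinuousOn.div (hfc.comp continuous_fst).continuousOn
          ((hfc.comp continuous_fst).sub (hfc.comp continuous_snd)).continuousOn hdne
      have hχc : ContinuousOn χ O :=
        ((continuousOn_const.sub hratc).smul continuous_fst.continuousOn).add
          (hratc.smul continuous_snd.continuousOn)
      have hNo : IsOpen (O ∩ χ ⁻¹' U) := hχc.isOpen_inter_preimage hOo hUo
      have hdab : f a - f b ≠ 0 := hdne (a, b) hprod
      have hs₂eq : s₂ = f a / (f a - f b) := by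
        rw [eq_div_iff hdab]
        linear_combination -hfeq
      have hχe : χ (a, b) = x := by
        rw [hχdef]
        simp only
        rw [← hs₂eq]
        exact hxeq
      have heN : (a, b) ∈ O ∩ χ ⁻¹' U := ⟨hprod, by rw [mem_preimage, hχe]; exact hxU⟩
      have hNS : O ∩ χ ⁻¹' U ⊆ S := by
        rintro ⟨a', b'⟩ ⟨hO', hU'⟩
        rw [mem_preimage] at hU'
        have hd : f a' - f b' ≠ 0 := hdne (a', b') hO'
        obtain ⟨hst0, hst1⟩ := keyst (f a') (f b') hO'
        have hfχ : f ((1 - f a' / (f a' - f b')) • a' + (f a' / (f a' - f b')) • b') = 0 := by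
          rw [hfa a' b' (f a' / (f a' - f b'))]
          field_simp
          ring
        have hχΔ : χ (a', b') ∈ Δ := hUΔ _ hfχ hU'
        refine ⟨χ (a', b'), ?_, hχΔ⟩
        exact ⟨1 - f a' / (f a' - f b'), f a' / (f a' - f b'),
          by linarith, le_of_lt hst0, by ring, rfl⟩
      exact Filter.mem_of_superset (hNo.mem_nhds heN) hNS
  intro e he
  obtain ⟨p, hp⟩ := hCconn.joinedIn e₀ he₀ e he
  set K : Set unitInterval := (⇑p) ⁻¹' S with hKdef
  have hKcl : IsClosed K := hScl.preimage p.continuous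
  have hKo : IsOpen K := by
    rw [isOpen_iff_mem_nhds]
    intro s hs
    exact p.continuous.continuousAt.preimage_mem_nhds (hnhds _ (hp s) hs)
  have h0 : (0 : unitInterval) ∈ K := by
    show p 0 ∈ S
    rw [p.source]
    exact hmeet
  have hKuniv : K = univ := IsClopen.eq_univ ⟨hKcl, hKo⟩ ⟨0, h0⟩
  have h1 : (1 : unitInterval) ∈ K := hKuniv ▸ mem_univ _
  have : p 1 ∈ S := h1
  rw [p.target] at this
  exact this

/-- If a triangle wide in τ and disjoint from ψ₁ ∪ ψ₂ intersects some segment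
of the connected family C, it intersects every segment of C; consequently, for
any family T of triangles, the set T_C of wide triangles disjoint from
ψ₁ ∪ ψ₂ met by all segments of C equals the set of such triangles met by any
single fixed segment e₀ ∈ C, independently of the choice of e₀. -/
theorem canonical_set_well_defined
    (τ ψ₁ ψ₂ : Set Pt3)
    (hτo : IsOpen τ) (hτc : IsConnected τ)
    (hψ₁ : ψ₁ ⊆ frontier τ) (hψ₂ : ψ₂ ⊆ frontier τ)
    (C : Set (Pt3 × Pt3))
    (hC : ∀ e ∈ C, e.1 ∈ ψ₁ ∧ e.2 ∈ ψ₂ ∧ openSegment ℝ e.1 e.2 ⊆ τ)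
    (hCconn : IsPathConnected C)
    (T : Set (Pt3 × Pt3 × Pt3))
    (hT : ∀ t ∈ T, AffineIndependent ℝ ![t.1, t.2.1, t.2.2]) :
    (∀ t ∈ T, triBdOf t ∩ τ = ∅ → triOf t ∩ (ψ₁ ∪ ψ₂) = ∅ →
      (∃ e ∈ C, (segment ℝ e.1 e.2 ∩ triOf t).Nonempty) →
      ∀ e ∈ C, (segment ℝ e.1 e.2 ∩ triOf t).Nonempty) ∧
    (∀ e₀ ∈ C,
      {t ∈ T | triBdOf t ∩ τ = ∅ ∧ triOf t ∩ (ψ₁ ∪ ψ₂) = ∅ ∧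
        ∀ e ∈ C, (segment ℝ e.1 e.2 ∩ triOf t).Nonempty} =
      {t ∈ T | triBdOf t ∩ τ = ∅ ∧ triOf t ∩ (ψ₁ ∪ ψ₂) = ∅ ∧
        (segment ℝ e₀.1 e₀.2 ∩ triOf t).Nonempty}) := by
  constructor
  · rintro t htT hbd hdisj ⟨e₀, he₀, hmeet⟩ e he
    exact tri_meets_all τ ψ₁ ψ₂ C hC hCconn t (hT t htT) hbd hdisj e₀ he₀ hmeet e he
  · intro e₀ he₀
    ext t
    simp only [Set.mem_setOf_eq]
    constructor
    · rintro ⟨htT, hbd, hdisj, hall⟩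
      exact ⟨htT, hbd, hdisj, hall e₀ he₀⟩
    · rintro ⟨htT, hbd, hdisj, hone⟩
      exact ⟨htT, hbd, hdisj,
        tri_meets_all τ ψ₁ ψ₂ C hC hCconn t (hT t htT) hbd hdisj e₀ he₀ hone⟩
end

section
/- Let e be a segment fully contained in an open set τ ⊂ ℝ³ on which a triangle Δ is wide (∂Δ ∩ τ = ∅) and such that e is not contained in the plane h_Δ supporting Δ. If e intersects Δ, then e intersects h_Δ at exactly one point and that point lies in the relative interior of Δ; conversely, if the unique point e ∩ h_Δ exists and lies in Δ, then e intersects Δ. Hence for such segments, intersection with Δ is equivalent to intersection with its supporting plane h_Δ restricted to Δ. -/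
/-- For a segment e contained in an open set τ in which the triangle Δ is wide
(∂Δ ∩ τ = ∅), with e not contained in the supporting plane h of Δ:
e meets Δ iff e meets h in a single point lying in Δ, and in that case the
intersection point lies in the relative interior of Δ. -/
theorem wide_triangle_plane_equivalence
    (τ : Set (EuclideanSpace ℝ (Fin 3))) (hτo : IsOpen τ)
    (A B P : EuclideanSpace ℝ (Fin 3))
    (hindep : AffineIndependent ℝ ![A, B, P])
    (Δ : Set (EuclideanSpace ℝ (Fin 3)))
    (hΔ : Δ = convexHull ℝ {A, B, P})
    (hwide : (segment ℝ A B ∪ segment ℝ B P ∪ segment ℝ P A) ∩ τ = ∅)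
    (p q : EuclideanSpace ℝ (Fin 3))
    (hseg : segment ℝ p q ⊆ τ)
    (hnsub : ¬ segment ℝ p q ⊆
      (affineSpan ℝ {A, B, P} : Set (EuclideanSpace ℝ (Fin 3)))) :
    ((segment ℝ p q ∩ Δ).Nonempty →
      ∃ x, segment ℝ p q ∩
          (affineSpan ℝ {A, B, P} : Set (EuclideanSpace ℝ (Fin 3))) = {x} ∧
        x ∈ intrinsicInterior ℝ Δ) ∧
    (∀ x, segment ℝ p q ∩
        (affineSpan ℝ {A, B, P} : Set (EuclideanSpace ℝ (Fin 3))) = {x} →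
      x ∈ Δ → (segment ℝ p q ∩ Δ).Nonempty) := by
  constructor
  · rintro ⟨x, hxseg, hxΔ⟩
    have hxspan : x ∈ (affineSpan ℝ {A, B, P} : Set (EuclideanSpace ℝ (Fin 3))) := by
      rw [hΔ] at hxΔ
      exact convexHull_subset_affineSpan _ hxΔ
    -- uniqueness of the intersection point with the plane
    have huniq : ∀ z ∈ segment ℝ p q,
        z ∈ (affineSpan ℝ {A, B, P} : Set (EuclideanSpace ℝ (Fin 3))) → z = x := by
      intro z hz hzspan
      by_contra hne
      apply hnsub
      rw [segment_eq_image_lineMap] at hz hxseg ⊢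
      obtain ⟨t2, _, rfl⟩ := hz
      obtain ⟨t1, _, rfl⟩ := hxseg
      have ht : t2 ≠ t1 := fun h => hne (by rw [h])
      have ht' : t2 - t1 ≠ 0 := sub_ne_zero.mpr ht
      rintro u ⟨t, _, rfl⟩
      have hu : AffineMap.lineMap p q t =
          AffineMap.lineMap (AffineMap.lineMap p q t1) (AffineMap.lineMap p q t2)
            ((t - t1) / (t2 - t1)) := by
        have hc : (t - t1) / (t2 - t1) * (t2 - t1) = t - t1 := div_mul_cancel₀ _ ht'
        simp only [AffineMap.lineMap_apply_module']
        match_scalars <;> field_simp <;> ring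
      rw [hu]
      exact AffineMap.lineMap_mem _ hxspan hzspan
    refine ⟨x, ?_, ?_⟩
    · ext u
      simp only [Set.mem_inter_iff, Set.mem_singleton_iff]
      exact ⟨fun h => huniq u h.1 h.2, fun h => h ▸ ⟨by
        rw [segment_eq_image_lineMap] at hxseg ⊢; exact hxseg, hxspan⟩⟩
    -- the intersection point is in the intrinsic interior
    · have hxτ : x ∈ τ := hseg hxseg
      have hxedge : ∀ s ∈ ({segment ℝ A B, segment ℝ B P, segment ℝ P A} :
          Set (Set (EuclideanSpace ℝ (Fin 3)))), x ∉ s := by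
        intro s hs hxs
        have : x ∈ (segment ℝ A B ∪ segment ℝ B P ∪ segment ℝ P A) ∩ τ := by
          refine ⟨?_, hxτ⟩
          simp only [Set.mem_insert_iff, Set.mem_singleton_iff] at hs
          rcases hs with rfl | rfl | rfl
          · exact Or.inl (Or.inl hxs)
          · exact Or.inl (Or.inr hxs)
          · exact Or.inr hxs
        rw [hwide] at this
        exact this
      -- set up the direction submodule and the isometry
      set D := (affineSpan ℝ ({A, B, P} : Set (EuclideanSpace ℝ (Fin 3)))).direction with hD
      have hDv : D = vectorSpan ℝ ({A, B, P} : Set (EuclideanSpace ℝ (Fin 3))) := by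
        rw [hD, direction_affineSpan]
      let ψ : D →ᵃⁱ[ℝ] EuclideanSpace ℝ (Fin 3) :=
        (AffineIsometryEquiv.vaddConst ℝ A).toAffineIsometry.comp
          D.subtypeₗᵢ.toAffineIsometry
      have hψ : ∀ d : D, ψ d = (d : EuclideanSpace ℝ (Fin 3)) + A := fun d => rfl
      have hmem : ∀ i : Fin 3, ![A, B, P] i -ᵥ A ∈ D := by
        intro i
        rw [hDv]
        refine vsub_mem_vectorSpan ℝ ?_ (by simp)
        fin_cases i <;> simp
      let v : Fin 3 → D := fun i => ⟨![A, B, P] i -ᵥ A, hmem i⟩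
      have hψv : (⇑ψ) ∘ v = ![A, B, P] := by
        funext i
        simp only [Function.comp_apply, hψ, v]
        simp [vsub_eq_sub]
      have hψv' : ψ.toAffineMap ∘ v = ![A, B, P] := hψv
      have hvind : AffineIndependent ℝ v :=
        AffineIndependent.of_comp ψ.toAffineMap (by rw [hψv']; exact hindep)
      have hrange : Set.range ![A, B, P] = {A, B, P} := by
        ext z
        simp [Matrix.range_cons, Matrix.range_empty]
        tauto
      have hfr : Module.finrank ℝ D = 2 := by
        rw [hDv]
        have := hindep.finrank_vectorSpan (by simp : Fintype.card (Fin 3) = 2 + 1)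
        rwa [hrange] at this
      have htot : affineSpan ℝ (Set.range v) = ⊤ := by
        rw [hvind.affineSpan_eq_top_iff_card_eq_finrank_add_one, hfr]
        simp
      let b : AffineBasis (Fin 3) ℝ D := ⟨v, hvind, htot⟩
      have hbcoe : ⇑b = v := rfl
      -- Δ is the image of the hull of the basis points
      have himg : ψ '' convexHull ℝ (Set.range v) = Δ := by
        rw [show ψ '' convexHull ℝ (Set.range v)
              = ψ.toAffineMap '' convexHull ℝ (Set.range v) from rfl,
          AffineMap.image_convexHull, hΔ]
        congr 1
        rw [← Set.range_comp]
        rw [show ⇑ψ.toAffineMap ∘ v = ![A, B, P] from hψv, hrange]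
      obtain ⟨y, hy, hyx⟩ : ∃ y ∈ convexHull ℝ (Set.range v), ψ y = x := by
        rw [← himg] at hxΔ; exact hxΔ
      -- barycentric coordinates of y are nonnegative
      have hy' : y ∈ convexHull ℝ (Set.range ⇑b) := by rwa [hbcoe]
      have hnn : ∀ i, 0 ≤ b.coord i y := by
        rw [b.convexHull_eq_nonneg_coord] at hy'
        exact hy'
      set w : Fin 3 → ℝ := fun i => b.coord i y with hw
      have hsum : ∑ i, w i = 1 := b.sum_coord_apply_eq_one y
      have hcomb : Finset.univ.affineCombination ℝ v w = y := by
        have := b.affineCombination_coord_eq_self y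
        rwa [hbcoe] at this
      have hxcomb : x = w 0 • A + w 1 • B + w 2 • P := by
        have h1 : ψ (Finset.univ.affineCombination ℝ v w)
            = Finset.univ.affineCombination ℝ (⇑ψ.toAffineMap ∘ v) w :=
          Finset.map_affineCombination _ _ _ hsum ψ.toAffineMap
        rw [hcomb, hyx] at h1
        rw [h1, show ⇑ψ.toAffineMap ∘ v = ![A, B, P] from hψv,
          Finset.affineCombination_eq_linear_combination _ _ _ hsum,
          Fin.sum_univ_three]
        simp
      -- coordinates are strictly positive, else x is on an edge
      have hpos : ∀ i, 0 < b.coord i y := by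
        intro i
        rcases lt_or_eq_of_le (hnn i) with h | h
        · exact h
        exfalso
        fin_cases i
        · apply hxedge (segment ℝ B P) (by simp)
          exact ⟨w 1, w 2, hnn 1, hnn 2, by
            have := hsum; rw [Fin.sum_univ_three] at this
            have hw0 : w 0 = 0 := h.symm
            linarith, by
            have hw0 : w 0 = 0 := h.symm
            rw [hxcomb, hw0]; simp⟩
        · apply hxedge (segment ℝ P A) (by simp)
          exact ⟨w 2, w 0, hnn 2, hnn 0, by
            have := hsum; rw [Fin.sum_univ_three] at this
            have hw1 : w 1 = 0 := h.symm
            linarith, by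
            have hw1 : w 1 = 0 := h.symm
            rw [hxcomb, hw1]; simp; abel⟩
        · apply hxedge (segment ℝ A B) (by simp)
          exact ⟨w 0, w 1, hnn 0, hnn 1, by
            have := hsum; rw [Fin.sum_univ_three] at this
            have hw2 : w 2 = 0 := h.symm
            linarith, by
            have hw2 : w 2 = 0 := h.symm
            rw [hxcomb, hw2]; simp⟩
      have hyint : y ∈ interior (convexHull ℝ (Set.range ⇑b)) := by
        rw [b.interior_convexHull]
        exact hpos
      rw [← himg, ψ.image_intrinsicInterior]
      exact ⟨y, interior_subset_intrinsicInterior (by rwa [hbcoe] at hyint), hyx⟩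
  · intro x hx hxΔ
    have hxmem : x ∈ segment ℝ p q ∩
        (affineSpan ℝ {A, B, P} : Set (EuclideanSpace ℝ (Fin 3))) := by
      rw [hx]; rfl
    exact ⟨x, hxmem.1, hxΔ⟩
end
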